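/- Let m > 2 be an integer and let k be a positive multiple of m. Let S be a finite set of k points in ℝ², let ξ₀ ≤ ξ₁ ≤ … ≤ ξ_m be real numbers, and let S = S₀ ∪ S₁ ∪ … ∪ S_{m−1} be a partition of S such that |S_i| = k/m and every point p ∈ S_i satisfies ξ_i ≤ p_x ≤ ξ_{i+1} for each i. Then the sum of the intra-strip x-weights of the middle strips satisfies Σ_{i=1}^{m−2} w_x(S_i) ≤ w_x(S)/(m−2). -/

import Mathlib

/-!
Let `n = k/m` and `D = ξ_{m-1} - ξ_1`. A middle strip `S_i` has width `ξ_{i+1} - ξ_i`, so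
`w_x(S_i) ≤ n² (ξ_{i+1} - ξ_i) / 2`, and these bounds telescope to `n² D / 2`. On the other
hand, for any point `q` of `S`, a point `p ∈ S_0` and a point `p' ∈ S_{m-1}` satisfy
`|p_x - q_x| + |p'_x - q_x| ≥ (q_x - ξ_1) + (ξ_{m-1} - q_x) = D`; summing over the `n` points of
each outer strip and the `m n` points `q` gives `2 w_x(S) ≥ m n² D`. Hence the middle sum is at
most `w_x(S)/m`, and it is nonnegative, so it is also at most `w_x(S)/(m-2)`.
-/

open Finset

/-- The sum of x-coordinate distances over all unordered pairs of distinct points of `S`. -/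
noncomputable def wx (S : Finset (Fin 2 → ℝ)) : ℝ := (∑ p ∈ S, ∑ q ∈ S, |p 0 - q 0|) / 2

section AbsSubSums

variable {α : Type*} (f : α → ℝ)

theorem sum_sum_abs_sub_le_card_sq_mul {A : Finset α} {a b : ℝ}
    (hA : ∀ p ∈ A, f p ∈ Set.Icc a b) :
    ∑ p ∈ A, ∑ q ∈ A, |f p - f q| ≤ #A ^ 2 * (b - a) := by
  calc ∑ p ∈ A, ∑ q ∈ A, |f p - f q| ≤ ∑ _p ∈ A, ∑ _q ∈ A, (b - a) :=
        sum_le_sum fun p hp => sum_le_sum fun q hq => Real.dist_le_of_mem_Icc (hA p hp) (hA q hq)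
    _ = #A ^ 2 * (b - a) := by simp only [sum_const, nsmul_eq_mul]; ring

theorem card_mul_sub_le_sum_abs_sub_of_forall_le {A : Finset α} {a : ℝ} (hA : ∀ p ∈ A, f p ≤ a)
    (x : ℝ) : #A * (x - a) ≤ ∑ p ∈ A, |f p - x| := by
  rw [← nsmul_eq_mul]
  refine card_nsmul_le_sum A _ _ fun p hp => ?_
  rw [abs_sub_comm]
  exact (sub_le_sub_left (hA p hp) x).trans (le_abs_self _)

theorem card_mul_sub_le_sum_abs_sub_of_forall_ge {B : Finset α} {b : ℝ} (hB : ∀ p ∈ B, b ≤ f p)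
    (x : ℝ) : #B * (b - x) ≤ ∑ p ∈ B, |f p - x| := by
  rw [← nsmul_eq_mul]
  exact card_nsmul_le_sum B _ _ fun p hp => (sub_le_sub_right (hB p hp) x).trans (le_abs_self _)

theorem card_mul_card_mul_sub_le_sum_sum_abs_sub {A B C : Finset α} {a b : ℝ} (hAB : #A = #B)
    (hA : ∀ p ∈ A, f p ≤ a) (hB : ∀ p ∈ B, b ≤ f p) :
    #A * #C * (b - a) ≤ ∑ p ∈ A, ∑ q ∈ C, |f p - f q| + ∑ p ∈ B, ∑ q ∈ C, |f p - f q| := by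
  rw [sum_comm, sum_comm (s := B), ← sum_add_distrib, mul_right_comm, mul_comm _ (#C : ℝ),
    ← nsmul_eq_mul]
  refine card_nsmul_le_sum C _ _ fun q _ => ?_
  have hleft := card_mul_sub_le_sum_abs_sub_of_forall_le f hA (f q)
  have hright := card_mul_sub_le_sum_abs_sub_of_forall_ge f hB (f q)
  rw [← hAB] at hright
  linarith

end AbsSubSums

section XWeight

theorem wx_nonneg (S : Finset (Fin 2 → ℝ)) : 0 ≤ wx S := by
  unfold wx
  positivity

theorem wx_le_of_forall_mem_Icc {A : Finset (Fin 2 → ℝ)} {a b : ℝ}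
    (hA : ∀ p ∈ A, p 0 ∈ Set.Icc a b) : wx A ≤ #A ^ 2 * (b - a) / 2 := by
  unfold wx
  linarith [sum_sum_abs_sub_le_card_sq_mul (fun p : Fin 2 → ℝ => p 0) hA]

theorem card_mul_card_mul_sub_le_two_mul_wx {S A B : Finset (Fin 2 → ℝ)} {a b : ℝ}
    (hAS : A ⊆ S) (hBS : B ⊆ S) (hAB : Disjoint A B) (hcard : #A = #B)
    (hA : ∀ p ∈ A, p 0 ≤ a) (hB : ∀ p ∈ B, b ≤ p 0) :
    #A * #S * (b - a) ≤ 2 * wx S := by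
  have hAB_le : ∑ p ∈ A ∪ B, ∑ q ∈ S, |p 0 - q 0| ≤ ∑ p ∈ S, ∑ q ∈ S, |p 0 - q 0| :=
    sum_le_sum_of_subset_of_nonneg (union_subset hAS hBS) fun _ _ _ =>
      sum_nonneg fun _ _ => abs_nonneg _
  rw [sum_union hAB] at hAB_le
  unfold wx
  linarith [card_mul_card_mul_sub_le_sum_sum_abs_sub (fun p : Fin 2 → ℝ => p 0) hcard hA hB
    (C := S)]

end XWeight

section Strips

variable {m n : ℕ} {Sc : ℕ → Finset (Fin 2 → ℝ)} {ξ : ℕ → ℝ}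

theorem sum_wx_middle_strips_le (hm : 2 ≤ m) (hcard : ∀ i < m, #(Sc i) = n)
    (hstrip : ∀ i < m, ∀ p ∈ Sc i, ξ i ≤ p 0 ∧ p 0 ≤ ξ (i + 1)) :
    ∑ i ∈ Ioo 0 (m - 1), wx (Sc i) ≤ n ^ 2 * (ξ (m - 1) - ξ 1) / 2 := by
  calc ∑ i ∈ Ioo 0 (m - 1), wx (Sc i)
      ≤ ∑ i ∈ Ico 1 (m - 1), n ^ 2 * (ξ (i + 1) - ξ i) / 2 :=
        sum_le_sum fun i hi => by
          have him : i < m := by simp only [mem_Ioo] at hi; omega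
          simpa only [hcard i him] using wx_le_of_forall_mem_Icc (hstrip i him)
    _ = n ^ 2 * (ξ (m - 1) - ξ 1) / 2 := by
        rw [← sum_div, ← mul_sum, sum_Ico_sub ξ (by omega)]

theorem mul_sq_mul_sub_le_two_mul_wx_biUnion (hm : 2 ≤ m)
    (hdisj : (range m : Set ℕ).PairwiseDisjoint Sc) (hcard : ∀ i < m, #(Sc i) = n)
    (hstrip : ∀ i < m, ∀ p ∈ Sc i, ξ i ≤ p 0 ∧ p 0 ≤ ξ (i + 1)) :
    m * n ^ 2 * (ξ (m - 1) - ξ 1) ≤ 2 * wx ((range m).biUnion Sc) := by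
  have h0 : 0 < m := by omega
  have hlast : m - 1 < m := by omega
  have hS : #((range m).biUnion Sc) = m * n := by
    rw [card_biUnion hdisj, sum_congr rfl fun i hi => hcard i (mem_range.1 hi), sum_const,
      card_range, smul_eq_mul]
  have hends := card_mul_card_mul_sub_le_two_mul_wx
    (subset_biUnion_of_mem Sc (mem_range.2 h0)) (subset_biUnion_of_mem Sc (mem_range.2 hlast))
    (hdisj (mem_range.2 h0) (mem_range.2 hlast) (by omega))
    ((hcard 0 h0).trans (hcard _ hlast).symm)
    (fun p hp => (hstrip 0 h0 p hp).2) (fun p hp => (hstrip _ hlast p hp).1)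
  rw [hS, hcard 0 h0, zero_add, Nat.cast_mul] at hends
  linarith

end Strips

theorem middle_strips_bound_general
    (m k : ℕ) (hm : 2 < m)
    (Sc : ℕ → Finset (Fin 2 → ℝ)) (ξ : ℕ → ℝ)
    (S : Finset (Fin 2 → ℝ))
    (hunion : S = (Finset.range m).biUnion Sc)
    (hdisj : ∀ i < m, ∀ j < m, i ≠ j → Disjoint (Sc i) (Sc j))
    (hcard : ∀ i < m, (Sc i).card = k / m)
    (hstrip : ∀ i < m, ∀ p ∈ Sc i, ξ i ≤ p 0 ∧ p 0 ≤ ξ (i + 1)) :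
    ∑ i ∈ Finset.Ioo 0 (m - 1), wx (Sc i) ≤ wx S / ((m : ℝ) - 2) := by
  set M : ℝ := ((k / m : ℕ) : ℝ) ^ 2 * (ξ (m - 1) - ξ 1) / 2 with hM_def
  have hmiddle : ∑ i ∈ Ioo 0 (m - 1), wx (Sc i) ≤ M :=
    sum_wx_middle_strips_le hm.le hcard hstrip
  have hends : m * M ≤ wx S := by
    have := mul_sq_mul_sub_le_two_mul_wx_biUnion hm.le
      (fun i hi j hj hij => hdisj i (mem_range.1 hi) j (mem_range.1 hj) hij) hcard hstrip
    rw [hunion, hM_def]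
    linarith
  have hM : 0 ≤ M := (sum_nonneg fun i _ => wx_nonneg (Sc i)).trans hmiddle
  have hm2 : (0 : ℝ) < m - 2 := by
    have : (3 : ℝ) ≤ m := by exact_mod_cast hm
    linarith
  rw [le_div_iff₀ hm2]
  nlinarith

/-- If `S` (of size `k`, a multiple of `m > 2`) is partitioned into `m` vertical strips
`S₀, …, S_{m−1}` of `k/m` points each, with strip `i` lying between x-coordinates `ξ_i`
and `ξ_{i+1}`, then the total intra-strip x-weight of the middle strips `S₁, …, S_{m−2}`
is at most `w_x(S)/(m−2)`. -/
theorem middle_strips_bound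
    (m k : ℕ) (hm : 2 < m) (hk : 0 < k) (hmk : m ∣ k)
    (Sc : ℕ → Finset (Fin 2 → ℝ)) (ξ : ℕ → ℝ)
    (hξ : ∀ i < m, ξ i ≤ ξ (i + 1))
    (S : Finset (Fin 2 → ℝ)) (hScard : S.card = k)
    (hunion : S = (Finset.range m).biUnion Sc)
    (hdisj : ∀ i < m, ∀ j < m, i ≠ j → Disjoint (Sc i) (Sc j))
    (hcard : ∀ i < m, (Sc i).card = k / m)
    (hstrip : ∀ i < m, ∀ p ∈ Sc i, ξ i ≤ p 0 ∧ p 0 ≤ ξ (i + 1)) :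
    ∑ i ∈ Finset.Ioo 0 (m - 1), wx (Sc i) ≤ wx S / ((m : ℝ) - 2) :=
  middle_strips_bound_general m k hm Sc ξ S hunion hdisj hcard hstrip
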